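/- arXiv:2008.10649 — 3 statements merged into one kernel-verified Lean document; each statement's English description precedes it below -/
import Mathlib

section
/- Let λ = (λ₁,…,λₙ) ∈ ℂⁿ with all λᵢ ≠ 0 and Σᵢ 1/λᵢ ≠ 0. Consider the subspace V = {(u₁,…,uₙ) ∈ ℂⁿ : u₁+⋯+uₙ = 0} and the bilinear form F(u,v) = Σᵢ 2λᵢuᵢvᵢ restricted to V. Then the radical (kernel) of F on V is zero, i.e., F is nondegenerate on V. -/
/-- Let `λ = (λ₁,…,λₙ) ∈ ℂⁿ` with all `λᵢ ≠ 0` and `Σᵢ 1/λᵢ ≠ 0`.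
On the subspace `V = {u : Σ uᵢ = 0}` with the bilinear form `F(u,v) = Σᵢ 2 λᵢ uᵢ vᵢ`,
the radical of `F` restricted to `V` is zero: any `u ∈ V` pairing to zero with all of `V`
is zero. (Linear-algebraic core of Lemma 2.1(b).) -/
theorem stmt_0 (n : ℕ) (lam : Fin n → ℂ) (hne : ∀ i, lam i ≠ 0)
    (hsum : (∑ i, (lam i)⁻¹) ≠ 0)
    (u : Fin n → ℂ) (hu : ∑ i, u i = 0)
    (hrad : ∀ v : Fin n → ℂ, (∑ i, v i = 0) → ∑ i, 2 * lam i * u i * v i = 0) :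
    u = 0 := by
  rcases Nat.eq_zero_or_pos n with h0 | hpos
  · subst h0; funext i; exact i.elim0
  · set j : Fin n := ⟨0, hpos⟩ with hj
    have key : ∀ i, lam i * u i = lam j * u j := by
      intro i
      have hv := hrad (fun k => (if k = i then 1 else 0) - (if k = j then 1 else 0))
        (by rw [Finset.sum_sub_distrib]; simp)
      have hexp : ∀ k : Fin n, k ∈ Finset.univ →
          2 * lam k * u k * ((if k = i then 1 else 0) - (if k = j then 1 else 0))
            = (if k = i then 2 * lam i * u i else 0)
              - (if k = j then 2 * lam j * u j else 0) := by
        intro k _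
        split_ifs <;> simp_all
      rw [Finset.sum_congr rfl hexp, Finset.sum_sub_distrib,
        Finset.sum_ite_eq' _ i, Finset.sum_ite_eq' _ j] at hv
      simp at hv
      linear_combination hv / 2
    have hui : ∀ i, u i = (lam j * u j) * (lam i)⁻¹ := by
      intro i
      rw [← key i, mul_comm (lam i), mul_assoc, mul_inv_cancel₀ (hne i), mul_one]
    have hsum0 : (lam j * u j) * (∑ i, (lam i)⁻¹) = 0 := by
      rw [Finset.mul_sum, ← Finset.sum_congr rfl (fun i _ => hui i)]
      exact hu
    have hc : lam j * u j = 0 := by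
      rcases mul_eq_zero.mp hsum0 with h | h
      · exact h
      · exact absurd h hsum
    funext i
    rw [hui i, hc, zero_mul]
    rfl
end

section
/- Let λ = (λ₁,…,λₙ) ∈ ℂⁿ with all λᵢ ≠ 0 and Σᵢ 1/λᵢ = 0. Consider V = {(u₁,…,uₙ) ∈ ℂⁿ : u₁+⋯+uₙ = 0} with the bilinear form F(u,v) = Σᵢ λᵢuᵢvᵢ restricted to V. Then the radical of F on V is the one-dimensional subspace spanned by (1/λ₁, 1/λ₂, …, 1/λₙ). -/
/-- (Lemma 2.1(c)) Let `λ ∈ ℂⁿ` with all `λᵢ ≠ 0` and `Σᵢ 1/λᵢ = 0`.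
On `V = {u : Σ uᵢ = 0}` with form `F(u,v) = Σᵢ λᵢ uᵢ vᵢ`, the radical of `F` on `V` is
exactly the (one-dimensional) span of the vector `(1/λ₁, …, 1/λₙ)`. -/
theorem stmt_1 (n : ℕ) (lam : Fin n → ℂ) (hne : ∀ i, lam i ≠ 0)
    (hsum : (∑ i, (lam i)⁻¹) = 0) :
    {u : Fin n → ℂ | (∑ i, u i = 0) ∧
        ∀ v : Fin n → ℂ, (∑ i, v i = 0) → ∑ i, lam i * u i * v i = 0} =
      {u : Fin n → ℂ | ∃ c : ℂ, u = fun i => c * (lam i)⁻¹} := by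
  ext u
  simp only [Set.mem_setOf_eq]
  constructor
  · rintro ⟨hu, hF⟩
    rcases Nat.eq_zero_or_pos n with h0 | hpos
    · exact ⟨0, funext fun i => absurd i.2 (by omega)⟩
    · set i0 : Fin n := ⟨0, hpos⟩
      refine ⟨lam i0 * u i0, funext fun i => ?_⟩
      have hv : ∑ j, ((if j = i then (1:ℂ) else 0) - (if j = i0 then 1 else 0)) = 0 := by
        simp [Finset.sum_sub_distrib]
      have hF' := hF _ hv
      have hsum' : ∑ j, lam j * u j *
          ((if j = i then (1:ℂ) else 0) - (if j = i0 then 1 else 0))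
          = lam i * u i - lam i0 * u i0 := by
        simp [mul_sub, Finset.sum_sub_distrib, mul_ite]
      rw [hsum'] at hF'
      have key : lam i * u i = lam i0 * u i0 := by linear_combination hF'
      rw [← key, mul_comm (lam i) (u i), mul_assoc, mul_inv_cancel₀ (hne i), mul_one]
  · rintro ⟨c, rfl⟩
    constructor
    · rw [← Finset.mul_sum, hsum, mul_zero]
    · intro v hv
      have : ∀ i, i ∈ Finset.univ → lam i * (c * (lam i)⁻¹) * v i = c * v i := by
        intro i _
        field_simp
        rw [div_eq_iff (hne i)]; ring
      rw [Finset.sum_congr rfl this, ← Finset.mul_sum, hv, mul_zero]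
end

section
/- Let A and A' be finite-dimensional ℂ-algebras, Ind : A-mod-morphisms → A' an injective algebra homomorphism (viewing A = End(M), A' = End(Ind M)), and Res : A' → Mat₂(A) an injective homomorphism such that Res(Ind γ) = [[γ, γ'],[0, γ]] for some γ' ∈ A depending on γ, and there is θ ∈ A' with Res θ = [[0,0],[Id,0]], and any φ ∈ A' with Res φ of the form [[0,σ],[0,τ]] satisfies Res φ = 0. Then γ' = 0 for every γ ∈ A, Ind(A) commutes with θ, θ² = 0, and A' ≅ A ⊗ ℂ[θ]/(θ²). -/
open scoped TensorProduct

set_option maxHeartbeats 1000000 in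
set_option synthInstance.maxHeartbeats 400000 in
/-- (The algebraic content of Lemma 3.10.)  Let `A`, `A'` be
finite-dimensional `ℂ`-algebras with `dim A' = 2 dim A`, `Ind : A → A'` an injective
algebra map and `Res : A' → Mat₂(A)` an injective algebra map such that
`Res(Ind γ) = [[γ, γ'],[0, γ]]` for some `γ'` depending on `γ`; suppose `θ ∈ A'`
satisfies `Res θ = [[0,0],[Id,0]]`, and that any `φ ∈ A'` with `Res φ` of the form
`[[0,σ],[0,τ]]` satisfies `Res φ = 0`.  Then `γ' = 0` for every `γ`, `Ind(A)` commutes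
with `θ`, `θ² = 0`, and `A' ≅ A ⊗ ℂ[θ]/(θ²)`. -/
theorem stmt_15 (A A' : Type) [Ring A] [Ring A'] [Algebra ℂ A] [Algebra ℂ A']
    [FiniteDimensional ℂ A] [FiniteDimensional ℂ A']
    (Ind : A →ₐ[ℂ] A') (hInd : Function.Injective Ind)
    (Res : A' →ₐ[ℂ] Matrix (Fin 2) (Fin 2) A) (hRes : Function.Injective Res)
    (g' : A → A)
    (hIndRes : ∀ γ : A, Res (Ind γ) = !![γ, g' γ; 0, γ])
    (θ : A') (hθ : Res θ = !![0, 0; 1, 0])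
    (hoff : ∀ φ : A', (Res φ) 0 0 = 0 → (Res φ) 1 0 = 0 → Res φ = 0)
    (hdim : Module.finrank ℂ A' = 2 * Module.finrank ℂ A) :
    (∀ γ : A, g' γ = 0) ∧
    (∀ γ : A, Ind γ * θ = θ * Ind γ) ∧
    θ * θ = 0 ∧
    Nonempty ((A ⊗[ℂ] DualNumber ℂ) ≃ₐ[ℂ] A') := by
  -- the commutator has Res equal to `!![g' γ, 0; 0, -(g' γ)]`
  have hc : ∀ γ : A, Res (Ind γ * θ - θ * Ind γ) = !![g' γ, 0; 0, -(g' γ)] := by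
    intro γ
    rw [map_sub, map_mul, map_mul, hIndRes, hθ]
    ext i j
    fin_cases i <;> fin_cases j <;>
      simp [Matrix.mul_apply, Fin.sum_univ_two]
  -- Step 1: `g' γ = 0`
  have h1 : ∀ γ : A, g' γ = 0 := by
    intro γ
    have h := hoff (Ind (g' γ) - (Ind γ * θ - θ * Ind γ)) ?_ ?_
    · have h11 := congrFun (congrFun h 1) 1
      rw [map_sub, hIndRes, hc] at h11
      simp at h11
      have : (2 : ℂ) • g' γ = 0 := by rw [two_smul]; exact h11
      simpa using this
    · rw [map_sub, hIndRes, hc]; simp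
    · rw [map_sub, hIndRes, hc]; simp
  -- Step 2: commutation
  have h2 : ∀ γ : A, Ind γ * θ = θ * Ind γ := by
    intro γ
    have := hc γ
    rw [h1 γ] at this
    have h0 : Res (Ind γ * θ - θ * Ind γ) = Res 0 := by
      rw [this, map_zero]
      ext i j
      fin_cases i <;> fin_cases j <;> simp
    have := hRes h0
    rwa [sub_eq_zero] at this
  -- Step 3: θ² = 0
  have h3 : θ * θ = 0 := by
    apply hRes
    rw [map_mul, hθ, map_zero]
    ext i j
    fin_cases i <;> fin_cases j <;>
      simp [Matrix.mul_apply, Fin.sum_univ_two]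
  refine ⟨h1, h2, h3, ?_⟩
  -- the algebra map `ℂ[ε] → A'` sending `ε` to `θ`
  let eθ : DualNumber ℂ →ₐ[ℂ] A' :=
    DualNumber.lift ⟨(Algebra.ofId ℂ A', θ), h3, fun a => (Algebra.commutes a θ).symm⟩
  have heθ : ∀ d : DualNumber ℂ, eθ d = algebraMap ℂ A' d.fst + algebraMap ℂ A' d.snd * θ := by
    intro d
    simp [eθ, DualNumber.lift_apply_apply, Algebra.ofId_apply]
  -- the algebra map `A ⊗ ℂ[ε] → A'`
  let Φ : (A ⊗[ℂ] DualNumber ℂ) →ₐ[ℂ] A' := Algebra.TensorProduct.lift Ind eθ (by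
    intro x d
    rw [heθ]
    have c1 : Commute (Ind x) (algebraMap ℂ A' d.fst) := (Algebra.commutes d.fst (Ind x)).symm
    have c2 : Commute (Ind x) (algebraMap ℂ A' d.snd * θ) :=
      Commute.mul_right ((Algebra.commutes d.snd (Ind x)).symm) (h2 x)
    exact c1.add_right c2)
  have hΦt : ∀ (γ : A) (d : DualNumber ℂ),
      Φ (γ ⊗ₜ d) = Ind γ * (algebraMap ℂ A' d.fst + algebraMap ℂ A' d.snd * θ) := by
    intro γ d
    simp [Φ, Algebra.TensorProduct.lift_tmul, heθ]
  -- Res of Φ on pure tensors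
  have hResΦ : ∀ (γ : A) (d : DualNumber ℂ),
      Res (Φ (γ ⊗ₜ d)) = !![d.fst • γ, 0; d.snd • γ, d.fst • γ] := by
    intro γ d
    rw [hΦt, map_mul, map_add, map_mul, hIndRes, h1 γ, AlgHom.commutes, AlgHom.commutes, hθ]
    ext i j
    fin_cases i <;> fin_cases j <;>
      simp [Matrix.mul_apply, Fin.sum_univ_two, Matrix.algebraMap_matrix_apply,
        Algebra.smul_def] <;>
      exact (Algebra.commutes _ _).symm
  -- a linear left inverse of Φ
  let G : A' →ₗ[ℂ] A ⊗[ℂ] DualNumber ℂ :=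
    { toFun := fun φ => (Res φ 0 0) ⊗ₜ (1 : DualNumber ℂ) + (Res φ 1 0) ⊗ₜ DualNumber.eps
      map_add' := by
        intro x y
        simp only [map_add, Matrix.add_apply, TensorProduct.add_tmul]
        abel
      map_smul' := by
        intro c x
        have h : Res (c • x) = c • Res x := map_smul Res.toLinearMap c x
        simp only [h, Matrix.smul_apply, TensorProduct.smul_tmul', RingHom.id_apply, smul_add] }
  have hGΦ : ∀ x, G (Φ x) = x := by
    intro x
    induction x using TensorProduct.induction_on with
    | zero => simp
    | tmul γ d =>
        show (Res (Φ (γ ⊗ₜ d)) 0 0) ⊗ₜ (1 : DualNumber ℂ)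
            + (Res (Φ (γ ⊗ₜ d)) 1 0) ⊗ₜ DualNumber.eps = γ ⊗ₜ d
        rw [hResΦ]
        have : (d.fst • γ) ⊗ₜ[ℂ] (1 : DualNumber ℂ) + (d.snd • γ) ⊗ₜ[ℂ] DualNumber.eps
            = γ ⊗ₜ (d.fst • 1 + d.snd • DualNumber.eps) := by
          rw [TensorProduct.tmul_add, TensorProduct.smul_tmul, TensorProduct.smul_tmul]
        show (d.fst • γ) ⊗ₜ[ℂ] (1 : DualNumber ℂ) + (d.snd • γ) ⊗ₜ[ℂ] DualNumber.eps = γ ⊗ₜ d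
        rw [this]
        congr 1
        ext
        · simp
        · simp
    | add x y hx hy => rw [map_add Φ, map_add G, hx, hy]
  haveI : Module.Finite ℂ (DualNumber ℂ) := inferInstanceAs (Module.Finite ℂ (ℂ × ℂ))
  have hinj : Function.Injective Φ := Function.LeftInverse.injective hGΦ
  have hfr : Module.finrank ℂ (A ⊗[ℂ] DualNumber ℂ) = Module.finrank ℂ A' := by
    rw [Module.finrank_tensorProduct, hdim]
    have : Module.finrank ℂ (DualNumber ℂ) = 2 := by
      rw [show Module.finrank ℂ (DualNumber ℂ) = Module.finrank ℂ (ℂ × ℂ) from rfl]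
      simp [Module.finrank_prod]
    rw [this]; ring
  have hsurj : Function.Surjective Φ :=
    (LinearMap.injective_iff_surjective_of_finrank_eq_finrank hfr).mp hinj
  exact ⟨AlgEquiv.ofBijective Φ ⟨hinj, hsurj⟩⟩
end
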